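/- arXiv:2501.07241 — 7 statements merged into one kernel-verified Lean document; each statement's English description precedes it below -/
import Mathlib

section
/- Let $\mathcal{U}, \mathcal{V}$ be elements of an associative algebra satisfying $[\mathcal{V},\mathcal{U}] = a\mathcal{V} + b$. Then for every $n \geq 1$, $(\mathcal{U}\mathcal{V})^n = \sum_{k=1}^{n} b^{n-k} S(n,k)\, \mathcal{U}(\mathcal{U}+a)(\mathcal{U}+2a)\cdots(\mathcal{U}+(k-1)a)\,\mathcal{V}^k$, where $S(n,k)$ are Stirling numbers of the second kind. -/
/-- The falling factorial `(z)_n = z(z-1)⋯(z-n+1)`. -/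
noncomputable def fallC (z : ℂ) (n : ℕ) : ℂ := ∏ j ∈ Finset.range n, (z - j)

/-!
Both sides are instances of one recursion. If `e 0 = 1` and `e k * x = e (k + 1) + k c e k`, then
`x ^ n = ∑ₖ S(n, k) c ^ (n - k) e k`, because the Stirling recurrence
`S(n + 1, k + 1) = (k + 1) S(n, k + 1) + S(n, k)` is exactly what multiplying by `x` produces.
For `x = z`, `c = 1`, `e k = (z)ₖ` this is the classical expansion of `z ^ n`, which pins the
given `S` down to Mathlib's `Nat.stirlingSecond` (falling factorials are triangular at the
integers). For `x = 𝒰𝒱`, `c = b`, `e k = 𝒰(𝒰 + a)⋯(𝒰 + (k - 1)a) 𝒱ᵏ` the recursion follows from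
`𝒱ᵏ 𝒰 𝒱 = (𝒰 + k a) 𝒱ᵏ⁺¹ + k b 𝒱ᵏ`, an induction on the commutation relation.
-/

open Finset

theorem sum_range_succ_eq_sum_Icc_one {M : Type*} [AddCommMonoid M] {f : ℕ → M} (hf : f 0 = 0)
    (n : ℕ) : ∑ k ∈ range (n + 1), f k = ∑ k ∈ Icc 1 n, f k := by
  rw [range_eq_Ico, sum_eq_sum_Ico_succ_bot n.succ_pos, hf, zero_add]
  rfl

theorem pow_eq_sum_stirlingSecond {A : Type*} [Semiring A] (x c : A) (e : ℕ → A)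
    (he₀ : e 0 = 1) (he : ∀ k, e k * x = e (k + 1) + k * c * e k) (n : ℕ) :
    x ^ n = ∑ k ∈ range (n + 1), (n.stirlingSecond k : A) * c ^ (n - k) * e k := by
  induction n with
  | zero => simp [he₀]
  | succ n ih =>
    have hterm : ∀ k ∈ range (n + 1), (n.stirlingSecond k : A) * c ^ (n - k) * e k * x
        = n.stirlingSecond k * c ^ (n - k) * e (k + 1)
          + k * n.stirlingSecond k * c ^ (n + 1 - k) * e k := by
      intro k hk
      have hnk : n + 1 - k = n - k + 1 := by have := mem_range.1 hk; omega
      rw [mul_assoc, he, mul_add, hnk, pow_succ]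
      congr 1
      simp only [mul_assoc]
      rw [(Nat.cast_commute k (n.stirlingSecond k : A)).left_comm,
        (Nat.cast_commute k (c ^ (n - k))).left_comm]
    have hshift : ∑ k ∈ range (n + 1), (k : A) * n.stirlingSecond k * c ^ (n + 1 - k) * e k
        = ∑ k ∈ range (n + 1),
            ((k + 1 : ℕ) : A) * n.stirlingSecond (k + 1) * c ^ (n - k) * e (k + 1) := by
      rw [sum_range_succ', sum_range_succ _ n]
      simp [Nat.stirlingSecond_eq_zero_of_lt]
    rw [pow_succ, ih, sum_mul, sum_congr rfl hterm, sum_add_distrib, hshift, ← sum_add_distrib,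
      sum_range_succ' _ (n + 1)]
    simp only [Nat.stirlingSecond_succ_zero, Nat.cast_zero, zero_mul, add_zero,
      Nat.stirlingSecond_succ_succ]
    refine sum_congr rfl fun k _ => ?_
    rw [Nat.add_sub_add_right, Nat.cast_add ((k + 1) * _), Nat.cast_mul, add_mul, add_mul,
      add_comm]

theorem fallC_succ (z : ℂ) (k : ℕ) : fallC z (k + 1) = fallC z k * (z - k) :=
  prod_range_succ _ _

theorem fallC_natCast (m k : ℕ) : fallC m k = m.descFactorial k := by
  rw [fallC, ← descPochhammer_eval_eq_prod_range, descPochhammer_eval_eq_descFactorial]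

theorem pow_eq_sum_stirlingSecond_mul_fallC (z : ℂ) {n : ℕ} (hn : n ≠ 0) :
    z ^ n = ∑ k ∈ Icc 1 n, (n.stirlingSecond k : ℂ) * fallC z k := by
  obtain ⟨m, rfl⟩ := Nat.exists_eq_succ_of_ne_zero hn
  rw [← sum_range_succ_eq_sum_Icc_one (by simp)]
  simpa using pow_eq_sum_stirlingSecond z 1 (fallC z) (by simp [fallC])
    (fun k => by rw [fallC_succ]; ring) (m + 1)

theorem eq_zero_of_forall_sum_mul_fallC_eq_zero (s : Finset ℕ) (d : ℕ → ℂ)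
    (hd : ∀ z, ∑ k ∈ s, d k * fallC z k = 0) : ∀ m ∈ s, d m = 0 := by
  intro m
  induction m using Nat.strong_induction_on with
  | _ m ih =>
    intro hm
    have hsum := hd m
    rw [sum_eq_single_of_mem m hm fun k hk hkm => ?_, fallC_natCast, Nat.descFactorial_self]
      at hsum
    · exact (mul_eq_zero.1 hsum).resolve_right (by exact_mod_cast m.factorial_ne_zero)
    · rcases hkm.lt_or_gt with hlt | hgt
      · rw [ih k hlt hk, zero_mul]
      · rw [fallC_natCast, Nat.descFactorial_of_lt hgt, Nat.cast_zero, mul_zero]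

theorem eq_stirlingSecond_of_pow_eq_sum {n : ℕ} (hn : n ≠ 0) (S : ℕ → ℂ)
    (hS : ∀ z : ℂ, z ^ n = ∑ k ∈ Icc 1 n, S k * fallC z k) :
    ∀ k ∈ Icc 1 n, S k = n.stirlingSecond k := by
  intro k hk
  refine sub_eq_zero.1 <|
    eq_zero_of_forall_sum_mul_fallC_eq_zero _ (fun k => S k - n.stirlingSecond k) (fun z => ?_) k hk
  rw [sum_congr rfl fun k _ => sub_mul _ _ _, sum_sub_distrib, ← hS,
    ← pow_eq_sum_stirlingSecond_mul_fallC z hn, sub_self]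

section Commutator

variable {K R : Type*} [CommRing K] [Ring R] [Algebra K R]

def risingProd (a : K) (U : R) (k : ℕ) : R :=
  ((List.range k).map fun j : ℕ => U + algebraMap K R (j * a)).prod

theorem risingProd_zero (a : K) (U : R) : risingProd a U 0 = 1 := rfl

theorem risingProd_succ (a : K) (U : R) (k : ℕ) :
    risingProd a U (k + 1) = risingProd a U k * (U + algebraMap K R (k * a)) := by
  simp [risingProd, List.range_succ]

variable {a b : K} {U V : R}

theorem pow_mul_mul_eq_of_commutator (h : V * U - U * V = a • V + algebraMap K R b) (k : ℕ) :
    V ^ k * (U * V)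
      = (U + algebraMap K R (k * a)) * V ^ (k + 1) + algebraMap K R (k * b) * V ^ k := by
  have hVU : V * U = U * V + a • V + b • 1 := by
    rw [← Algebra.algebraMap_eq_smul_one, add_assoc, ← h]; abel
  induction k with
  | zero => simp
  | succ k ih =>
    simp only [Algebra.algebraMap_eq_smul_one, add_mul, smul_mul_assoc, one_mul] at ih ⊢
    calc V ^ (k + 1) * (U * V) = V * (V ^ k * (U * V)) := by rw [pow_succ', mul_assoc]
      _ = V * U * V ^ (k + 1) + (k * a) • V ^ (k + 2) + (k * b) • V ^ (k + 1) := by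
        rw [ih, mul_add, mul_add, mul_smul_comm, mul_smul_comm, ← mul_assoc, ← pow_succ',
          ← pow_succ']
      _ = _ := by
        rw [hVU]
        simp only [add_mul, smul_mul_assoc, one_mul, ← pow_succ', mul_assoc]
        push_cast
        module

theorem risingProd_mul_pow_mul_mul (h : V * U - U * V = a • V + algebraMap K R b) (k : ℕ) :
    risingProd a U k * V ^ k * (U * V)
      = risingProd a U (k + 1) * V ^ (k + 1)
        + k * algebraMap K R b * (risingProd a U k * V ^ k) := by
  have hcomm : Commute ((k : R) * algebraMap K R b) (risingProd a U k) :=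
    (Nat.cast_commute k _).mul_left (Algebra.commute_algebraMap_left b _)
  rw [mul_assoc, pow_mul_mul_eq_of_commutator h, mul_add, ← mul_assoc, ← risingProd_succ,
    map_mul, map_natCast, ← mul_assoc, ← hcomm.eq, mul_assoc]

theorem mul_pow_eq_sum_stirlingSecond (h : V * U - U * V = a • V + algebraMap K R b) (n : ℕ) :
    (U * V) ^ n = ∑ k ∈ range (n + 1),
      algebraMap K R (b ^ (n - k) * n.stirlingSecond k) * risingProd a U k * V ^ k := by
  rw [pow_eq_sum_stirlingSecond (U * V) (algebraMap K R b) _ (by simp [risingProd_zero])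
    (risingProd_mul_pow_mul_mul h) n]
  refine sum_congr rfl fun k _ => ?_
  rw [map_mul, map_pow, map_natCast, ← (Nat.cast_commute _ _).eq, mul_assoc, mul_assoc, mul_assoc]

end Commutator

theorem stmt_1 {R : Type*} [Ring R] [Algebra ℂ R] (a b : ℂ) (U V : R)
    (h : V * U - U * V = a • V + algebraMap ℂ R b)
    (S : ℕ → ℕ → ℂ)
    (hS : ∀ n : ℕ, 1 ≤ n → ∀ z : ℂ, z ^ n = ∑ k ∈ Finset.Icc 1 n, S n k * fallC z k)
    (n : ℕ) (hn : 1 ≤ n) :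
    (U * V) ^ n = ∑ k ∈ Finset.Icc 1 n,
      algebraMap ℂ R (b ^ (n - k) * S n k)
        * ((List.range k).map (fun j => U + algebraMap ℂ R ((j : ℂ) * a))).prod
        * V ^ k := by
  obtain ⟨m, rfl⟩ : ∃ m, n = m + 1 := ⟨n - 1, by omega⟩
  rw [mul_pow_eq_sum_stirlingSecond h, sum_range_succ_eq_sum_Icc_one (by simp)]
  refine sum_congr rfl fun k hk => ?_
  rw [eq_stirlingSecond_of_pow_eq_sum m.succ_ne_zero (S (m + 1)) (hS (m + 1) hn) k hk]
  -- `(j : ℂ)` makes Lean coerce `List.range k` to `List ℂ` through the list monad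
  simp only [bind_pure_comp, List.map_eq_map, List.map_map]
  rfl
end

section
/- For all $h, r \in \mathbb{C}$ and $n \geq 1$, the generalized Stirling numbers satisfy $S(n,0;h,r) = (r \mid h)_n$, and for $1 \leq k \leq n$, $S(n,k;h,r) = \sum_{j=0}^{n-k} \binom{n}{j} (-h)^{n-j-k} L(n-j,k)\,(r \mid h)_j$, where $L(m,k) = \binom{m-1}{k-1}\frac{m!}{k!}$ are the unsigned Lah numbers. -/
/-!
Vandermonde's identity for generalized factorials,
`(z + r ∣ h)_n = ∑ⱼ C(n,j) (r ∣ h)_j (z ∣ h)_{n-j}`, reduces the theorem to expanding `(z ∣ h)_m`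
in the basis `(z ∣ -h)_k`. The coefficients of that expansion are `(-h)^{m-k} L(m,k)`: writing
`z - mh = (z + kh) - (m+k)h` in `(z ∣ h)_{m+1} = (z ∣ h)_m (z - mh)` yields the Lah recurrence
`L(m+1,k+1) = L(m,k) + (m+k+1) L(m,k+1)`. Finally, the coefficients `S(n,k;h,r)` are determined
by the identity since `(z ∣ -h)_k` is a polynomial in `z` of degree `k`.
-/

/-- The generalized factorial with increment `h`: `(z ∣ h)_n = z(z-h)⋯(z-(n-1)h)`. -/
noncomputable def genFact (z h : ℂ) (n : ℕ) : ℂ := ∏ j ∈ Finset.range n, (z - j * h)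

/-- The unsigned Lah numbers `L(m,k) = C(m-1,k-1) m!/k!`. -/
noncomputable def lah (m k : ℕ) : ℂ := (Nat.choose (m - 1) (k - 1)) * m.factorial / k.factorial

open Finset Polynomial

lemma genFact_succ (z h : ℂ) (n : ℕ) : genFact z h (n + 1) = genFact z h n * (z - n * h) :=
  prod_range_succ _ n

noncomputable def genFactSeq (h : ℂ) : Polynomial.Sequence ℂ where
  elems' k := ∏ j ∈ range k, (X - C ((j : ℂ) * h))
  degree_eq' k := by
    rw [degree_prod]
    simp only [degree_X_sub_C, sum_const, card_range, nsmul_eq_mul, mul_one, Nat.cast_withBot]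

lemma eval_genFactSeq (z h : ℂ) (k : ℕ) : (genFactSeq h k).eval z = genFact z h k := by
  simp [genFactSeq, genFact, eval_prod]

lemma eq_of_sum_mul_genFact_eq {h : ℂ} {n : ℕ} {a b : ℕ → ℂ}
    (hab : ∀ z, ∑ k ∈ range (n + 1), a k * genFact z h k =
      ∑ k ∈ range (n + 1), b k * genFact z h k) {k : ℕ} (hk : k ≤ n) : a k = b k := by
  have hzero : ∑ k ∈ range (n + 1), (a k - b k) • genFactSeq h k = 0 := by
    refine Polynomial.funext fun z => ?_
    simpa [eval_finsetSum, sub_mul, sum_sub_distrib, sub_eq_zero, eval_genFactSeq] using hab z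
  exact sub_eq_zero.mp <| linearIndependent_iff'.mp (genFactSeq h).linearIndependent _ _ hzero k
    (mem_range.mpr (Nat.lt_succ_of_le hk))

lemma genFact_add (z r h : ℂ) (n : ℕ) :
    genFact (z + r) h n =
      ∑ ij ∈ antidiagonal n, n.choose ij.1 * (genFact r h ij.1 * genFact z h ij.2) := by
  induction n with
  | zero => simp [genFact]
  | succ n ih =>
    rw [genFact_succ, ih, sum_mul,
      sum_antidiagonal_choose_succ_mul (fun i j => genFact r h i * genFact z h j),
      ← sum_add_distrib]
    refine sum_congr rfl fun ij hij => ?_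
    have hn := (mem_antidiagonal.mp hij).symm
    rw [← Nat.choose_symm_of_eq_add hn, genFact_succ, genFact_succ, hn]
    push_cast
    ring

/-- Unlike the closed form `lah`, which is junk at `k = 0`, the recurrence gives
`lahNumber m 0 = 0` for `m ≠ 0`. -/
def lahNumber : ℕ → ℕ → ℕ
  | 0, 0 => 1
  | 0, _ + 1 => 0
  | _ + 1, 0 => 0
  | m + 1, k + 1 => lahNumber m k + (m + k + 1) * lahNumber m (k + 1)

lemma lahNumber_eq_zero_of_lt : ∀ {m k : ℕ}, m < k → lahNumber m k = 0
  | 0, _ + 1, _ => rfl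
  | m + 1, k + 1, hmk => by
    rw [lahNumber, lahNumber_eq_zero_of_lt (by omega), lahNumber_eq_zero_of_lt (by omega),
      mul_zero, add_zero]

lemma cast_lahNumber_succ_succ (m k : ℕ) :
    (lahNumber (m + 1) (k + 1) : ℂ) = lah (m + 1) (k + 1) := by
  induction m generalizing k with
  | zero => cases k <;> simp [lahNumber, lah]
  | succ m ih =>
    cases k with
    | zero =>
      have := ih 0
      simp only [lahNumber, lah, Nat.add_sub_cancel, Nat.choose_zero_right] at this ⊢
      push_cast [this, Nat.factorial_succ]
      ring
    | succ k =>
      rw [lahNumber]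
      push_cast [ih k, ih (k + 1)]
      simp only [lah, Nat.add_sub_cancel]
      have pascal : ((m + 1).choose (k + 1) : ℂ) = m.choose k + m.choose (k + 1) := by
        exact_mod_cast Nat.choose_succ_succ m k
      have absorb : ((m + 1 : ℕ) : ℂ) * m.choose k = (m + 1).choose (k + 1) * (k + 1 : ℕ) := by
        exact_mod_cast Nat.add_one_mul_choose_eq m k
      rw [Nat.factorial_succ (m + 1), Nat.factorial_succ (k + 1)]
      have hk : ((k + 1).factorial : ℂ) ≠ 0 := Nat.cast_ne_zero.mpr (Nat.factorial_ne_zero _)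
      push_cast at pascal absorb ⊢
      have hk' : (k : ℂ) + 1 + 1 ≠ 0 := by norm_cast
      field_simp
      linear_combination (-((m + 1).factorial : ℂ) * (m + k + 3)) * pascal
        - ((m + 1).factorial : ℂ) * absorb

lemma genFact_eq_sum_lahNumber (z h : ℂ) (m : ℕ) :
    genFact z h m = ∑ k ∈ range (m + 1), (-h) ^ (m - k) * lahNumber m k * genFact z (-h) k := by
  induction m with
  | zero => simp [genFact, lahNumber]
  | succ m ih =>
    set w : ℕ → ℕ → ℂ := fun m k => (-h) ^ (m - k) * lahNumber m k with hw
    set F := genFact z (-h)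
    set g : ℕ → ℂ := fun k => ((m + k : ℕ) : ℂ) * h * (w m k * F k) with hg
    have w_succ_succ (k : ℕ) : w (m + 1) (k + 1) = w m k - (m + k + 1) * h * w m (k + 1) := by
      rcases lt_or_ge k m with hk | hk
      · obtain ⟨d, rfl⟩ := Nat.exists_eq_add_of_lt hk
        simp only [hw, lahNumber, Nat.add_sub_add_right, show k + d + 1 - k = d + 1 by omega,
          show k + d + 1 - (k + 1) = d by omega]
        push_cast
        ring
      · simp [hw, lahNumber, lahNumber_eq_zero_of_lt (Nat.lt_succ_of_le hk)]
    have shift : ∑ k ∈ range (m + 1), g (k + 1) = ∑ k ∈ range (m + 1), g k := by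
      have hg₀ : g 0 = 0 := by cases m <;> simp [hg, hw, lahNumber]
      have hg₁ : g (m + 1) = 0 := by simp [hg, hw, lahNumber_eq_zero_of_lt (Nat.lt_succ_self m)]
      have := (sum_range_succ' g (m + 1)).symm.trans (sum_range_succ g (m + 1))
      rwa [hg₀, hg₁, add_zero, add_zero] at this
    calc genFact z h (m + 1)
        = ∑ k ∈ range (m + 1), (w m k * F (k + 1) - g k) := by
          rw [genFact_succ, ih, sum_mul]
          refine sum_congr rfl fun k _ => ?_
          simp only [hg, F, genFact_succ]
          push_cast
          ring
      _ = ∑ k ∈ range (m + 1), (w m k * F (k + 1) - g (k + 1)) := by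
          rw [sum_sub_distrib, sum_sub_distrib, shift]
      _ = ∑ k ∈ range (m + 1), w (m + 1) (k + 1) * F (k + 1) := by
          refine sum_congr rfl fun k _ => ?_
          rw [w_succ_succ, hg]
          push_cast
          ring
      _ = _ := by
          rw [sum_range_succ' _ (m + 1)]
          simp [hw, lahNumber]

noncomputable def stirlingCoeff (h r : ℂ) (n k : ℕ) : ℂ :=
  ∑ j ∈ range (n + 1), n.choose j * (-h) ^ (n - j - k) * lahNumber (n - j) k * genFact r h j

lemma genFact_add_eq_sum_stirlingCoeff (z r h : ℂ) (n : ℕ) :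
    genFact (z + r) h n = ∑ k ∈ range (n + 1), stirlingCoeff h r n k * genFact z (-h) k := by
  have lah_expand {j : ℕ} (hj : j ∈ range (n + 1)) : genFact z h (n - j) =
      ∑ k ∈ range (n + 1), (-h) ^ (n - j - k) * lahNumber (n - j) k * genFact z (-h) k := by
    rw [genFact_eq_sum_lahNumber]
    refine sum_subset (range_subset_range.2 (by omega)) fun k _ hk => ?_
    simp [lahNumber_eq_zero_of_lt (show n - j < k by rw [mem_range] at hk; omega)]
  simp_rw [stirlingCoeff, sum_mul]
  rw [genFact_add, Nat.sum_antidiagonal_eq_sum_range_succ_mk, sum_comm]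
  refine sum_congr rfl fun j hj => ?_
  rw [lah_expand hj, mul_sum, mul_sum]
  refine sum_congr rfl fun k _ => ?_
  ring

lemma stirlingCoeff_zero (h r : ℂ) (n : ℕ) : stirlingCoeff h r n 0 = genFact r h n := by
  rw [stirlingCoeff, sum_eq_single_of_mem n (self_mem_range_succ n)]
  · simp [lahNumber]
  · intro j hj hjn
    obtain ⟨d, hd⟩ : ∃ d, n - j = d + 1 := ⟨n - j - 1, by rw [mem_range] at hj; omega⟩
    simp [hd, lahNumber]

lemma stirlingCoeff_eq_sum_lah (h r : ℂ) {n k : ℕ} (hk : 1 ≤ k) (hkn : k ≤ n) :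
    stirlingCoeff h r n k = ∑ j ∈ range (n - k + 1),
      n.choose j * (-h) ^ (n - j - k) * lah (n - j) k * genFact r h j := by
  rw [stirlingCoeff, ← sum_subset (range_subset_range.2 (by omega : n - k + 1 ≤ n + 1))]
  · refine sum_congr rfl fun j hj => ?_
    obtain ⟨m, hm⟩ : ∃ m, n - j = m + 1 := ⟨n - j - 1, by rw [mem_range] at hj; omega⟩
    obtain ⟨l, rfl⟩ : ∃ l, k = l + 1 := ⟨k - 1, by omega⟩
    rw [hm, cast_lahNumber_succ_succ]
  · intro j _ hj
    simp [lahNumber_eq_zero_of_lt (show n - j < k by rw [mem_range] at hj; omega)]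

theorem stmt_3_general (h r : ℂ) (Sg : ℕ → ℕ → ℂ)
    (hSg : ∀ n : ℕ, ∀ z : ℂ,
      genFact (z + r) h n = ∑ k ∈ Finset.range (n + 1), Sg n k * genFact z (-h) k)
    (n : ℕ) :
    Sg n 0 = genFact r h n ∧
    ∀ k, 1 ≤ k → k ≤ n →
      Sg n k = ∑ j ∈ Finset.range (n - k + 1),
        (Nat.choose n j) * (-h) ^ (n - j - k) * lah (n - j) k * genFact r h j := by
  have hSg_eq {k : ℕ} (hk : k ≤ n) : Sg n k = stirlingCoeff h r n k :=
    eq_of_sum_mul_genFact_eq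
      (fun z => (hSg n z).symm.trans (genFact_add_eq_sum_stirlingCoeff z r h n)) hk
  exact ⟨(hSg_eq n.zero_le).trans (stirlingCoeff_zero h r n),
    fun k hk hkn => (hSg_eq hkn).trans (stirlingCoeff_eq_sum_lah h r hk hkn)⟩

theorem stmt_3 (h r : ℂ) (Sg : ℕ → ℕ → ℂ)
    (hSg : ∀ n : ℕ, ∀ z : ℂ,
      genFact (z + r) h n = ∑ k ∈ Finset.range (n + 1), Sg n k * genFact z (-h) k)
    (n : ℕ) (hn : 1 ≤ n) :
    Sg n 0 = genFact r h n ∧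
    ∀ k, 1 ≤ k → k ≤ n →
      Sg n k = ∑ j ∈ Finset.range (n - k + 1),
        (Nat.choose n j) * (-h) ^ (n - j - k) * lah (n - j) k * genFact r h j :=
  stmt_3_general h r Sg hSg n
end

section
/- Let $\alpha \geq \beta > 0$, $\sigma > 0$, $\eta = \alpha\beta$, and let $\mu_{\alpha,\beta,\sigma}$ be the gamma distribution (if $\alpha = \beta$) or the negative binomial distribution (if $\alpha > \beta$). Then for every $n \geq 1$, the $n$-th moment is $\int x^n \, \mu_{\alpha,\beta,\sigma}(dx) = \sum_{k=1}^n (\alpha-\beta)^{n-k} S(n,k)\,(\sigma/\alpha \mid -\beta)_k$. -/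
/-!
For `α = β` the measure is a gamma law, whose moments are Euler integrals `θⁿ Γ(a + n) / Γ(a)`;
on the right only the term `k = n` survives, and `S(n, n) = 1`. For `α > β` it is the law of
`(α - β) M` with `M` negative binomial: expanding `Mⁿ` in falling factorials reduces the claim to
the factorial moments `𝔼 (M)ₖ = (p / (1 - p))ᵏ (r)⁽ᵏ⁾`, obtained by shifting the index by `k` and
summing the binomial series `∑ₗ (c)⁽ˡ⁾ xˡ / l! = (1 - x)⁻ᶜ`. With `p = β / α` and `r = σ / (αβ)`,
`p / (1 - p) = β / (α - β)` and `βᵏ (r)⁽ᵏ⁾ = (σ / α | -β)ₖ`.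
-/

open MeasureTheory

/-- The orthogonality measure `μ_{α,β,σ}`: the gamma distribution when `α = β`, and the
negative binomial (Pascal) distribution on `(α-β)ℕ₀` when `α ≠ β`. Here `η = αβ`. -/
noncomputable def muM (α β σ : ℝ) : Measure ℝ :=
  if α = β then
    volume.withDensity fun x =>
      ENNReal.ofReal (if 0 < x then
        (Real.Gamma (σ / (α * β)))⁻¹ * α ^ (-(σ / (α * β))) * x ^ (σ / (α * β) - 1)
          * Real.exp (-x / α)
      else 0)
  else
    Measure.sum fun m : ℕ =>
      ENNReal.ofReal ((1 - β / α) ^ (σ / (α * β)) * (β / α) ^ m * ((m.factorial : ℝ))⁻¹ *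
        ∏ j ∈ Finset.range m, (σ / (α * β) + j)) • Measure.dirac ((α - β) * m)

open Finset

theorem ascPochhammer_eval_eq_prod_range {R : Type*} [CommSemiring R] (n : ℕ) (r : R) :
    (ascPochhammer R n).eval r = ∏ j ∈ range n, (r + j) := by
  induction n with
  | zero => simp
  | succ n ih => simp [ascPochhammer_succ_right, ih, prod_range_succ]

theorem prod_range_natCast_sub_eq_descFactorial {R : Type*} [CommRing R] (m k : ℕ) :
    ∏ j ∈ range k, ((m : R) - j) = m.descFactorial k := by
  rw [← descPochhammer_eval_eq_prod_range, descPochhammer_eval_eq_descFactorial]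

theorem pow_mul_prod_range_div_add {b : ℝ} (hb : b ≠ 0) (c : ℝ) (k : ℕ) :
    b ^ k * ∏ j ∈ range k, (c / b + j) = ∏ j ∈ range k, (c + j * b) := by
  rw [show b ^ k = b ^ #(range k) by rw [card_range], pow_card_mul_prod]
  refine prod_congr rfl fun j _ => ?_
  field_simp

open Polynomial in
theorem eq_one_of_pow_eq_sum_mul_prod_sub {n : ℕ} (hn : 1 ≤ n) {a : ℕ → ℝ}
    (h : ∀ z : ℝ, z ^ n = ∑ k ∈ Icc 1 n, a k * ∏ j ∈ range k, (z - j)) : a n = 1 := by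
  have hpoly : (X ^ n : ℝ[X]) = ∑ k ∈ Icc 1 n, C (a k) * descPochhammer ℝ k := by
    refine Polynomial.funext fun z => ?_
    simp only [eval_pow, eval_X, eval_finsetSum, eval_mul, eval_C,
      descPochhammer_eval_eq_prod_range, h z]
  have hcoeff := congrArg (coeff · n) hpoly
  have hlead : (descPochhammer ℝ n).coeff n = 1 := by
    simpa only [descPochhammer_natDegree] using (monic_descPochhammer ℝ n).coeff_natDegree
  simp only [coeff_X_pow_self, finsetSum_coeff, coeff_C_mul] at hcoeff
  rw [sum_eq_single_of_mem n (mem_Icc.2 ⟨hn, le_rfl⟩), hlead, mul_one] at hcoeff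
  · exact hcoeff.symm
  · intro k hk hkn
    have hlt : (descPochhammer ℝ k).natDegree < n := by
      rw [descPochhammer_natDegree]
      exact lt_of_le_of_ne (mem_Icc.1 hk).2 hkn
    rw [coeff_eq_zero_of_natDegree_lt hlt, mul_zero]

theorem Ring.choose_add_sub_one_eq_prod_div_factorial (c : ℝ) (n : ℕ) :
    Ring.choose (c + n - 1) n = (∏ j ∈ range n, (c + j)) / n.factorial := by
  rw [← Ring.multichoose_eq, eq_div_iff (by positivity), mul_comm, ← nsmul_eq_mul,
    Ring.factorial_nsmul_multichoose_eq_ascPochhammer, Polynomial.ascPochhammer_smeval_eq_eval,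
    ascPochhammer_eval_eq_prod_range]

theorem Real.hasSum_prod_add_mul_pow_div_factorial (c : ℝ) {x : ℝ} (hx : |x| < 1) :
    HasSum (fun m : ℕ => (∏ j ∈ range m, (c + j)) * x ^ m / m.factorial) ((1 - x) ^ (-c)) := by
  have hx' : x ∈ Metric.eball (0 : ℝ) 1 := by
    rw [Metric.mem_eball, edist_zero_right, ← ofReal_norm]
    exact ENNReal.ofReal_lt_one.2 hx
  have h := (Real.one_div_one_sub_rpow_hasFPowerSeriesOnBall_zero c).hasSum hx'
  rw [FormalMultilinearSeries.ofScalars_apply_eq', zero_add, one_div,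
    ← Real.rpow_neg (by linarith [le_abs_self x])] at h
  refine h.congr_fun fun m => ?_
  rw [Ring.choose_add_sub_one_eq_prod_div_factorial, smul_eq_mul]
  ring

section NegativeBinomial

noncomputable def negBinomialWeight (r p : ℝ) (m : ℕ) : ℝ :=
  (1 - p) ^ r * p ^ m * (m.factorial : ℝ)⁻¹ * ∏ j ∈ range m, (r + j)

theorem negBinomialWeight_nonneg {r p : ℝ} (hr : 0 ≤ r) (hp₀ : 0 ≤ p) (hp₁ : p ≤ 1) (m : ℕ) :
    0 ≤ negBinomialWeight r p m := by
  have : 0 ≤ ∏ j ∈ range m, (r + j) := prod_nonneg fun j _ => by positivity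
  have : 0 ≤ (1 - p) ^ r := Real.rpow_nonneg (by linarith) r
  unfold negBinomialWeight
  positivity

theorem negBinomialWeight_add_mul_prod_sub (r p : ℝ) (k l : ℕ) :
    negBinomialWeight r p (l + k) * ∏ j ∈ range k, (((l + k : ℕ) : ℝ) - j) =
      (1 - p) ^ r * p ^ k * (∏ j ∈ range k, (r + j)) *
        ((∏ j ∈ range l, (r + k + j)) * p ^ l / l.factorial) := by
  have hfactorial : ((l + k).descFactorial k : ℝ) * l.factorial = (l + k).factorial := by
    have := Nat.factorial_mul_descFactorial (show k ≤ l + k by omega)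
    rw [Nat.add_sub_cancel] at this
    rw [← this]
    push_cast
    ring
  have hrising : ∏ j ∈ range (l + k), (r + j) =
      (∏ j ∈ range k, (r + j)) * ∏ j ∈ range l, (r + k + j) := by
    rw [add_comm l k, prod_range_add]
    push_cast
    simp only [add_assoc]
  rw [negBinomialWeight, prod_range_natCast_sub_eq_descFactorial, hrising, ← hfactorial]
  field_simp
  ring

theorem hasSum_negBinomialWeight_mul_prod_sub (r : ℝ) {p : ℝ} (hp : |p| < 1) (k : ℕ) :
    HasSum (fun m : ℕ => negBinomialWeight r p m * ∏ j ∈ range k, ((m : ℝ) - j))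
      ((p / (1 - p)) ^ k * ∏ j ∈ range k, (r + j)) := by
  have hp' : 0 < 1 - p := by linarith [le_abs_self p]
  rw [← hasSum_nat_add_iff' k]
  have hhead : ∑ m ∈ range k, negBinomialWeight r p m * ∏ j ∈ range k, ((m : ℝ) - j) = 0 :=
    sum_eq_zero fun m hm => by rw [prod_eq_zero hm (sub_self _), mul_zero]
  rw [hhead, sub_zero]
  simp_rw [negBinomialWeight_add_mul_prod_sub]
  have h := (Real.hasSum_prod_add_mul_pow_div_factorial (r + k) hp).mul_left
    ((1 - p) ^ r * p ^ k * ∏ j ∈ range k, (r + j))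
  have hvalue : (1 - p) ^ r * p ^ k * (∏ j ∈ range k, (r + j)) * (1 - p) ^ (-(r + k)) =
      (p / (1 - p)) ^ k * ∏ j ∈ range k, (r + j) := by
    rw [Real.rpow_neg hp'.le, Real.rpow_add hp', Real.rpow_natCast, div_pow]
    field_simp
  rwa [hvalue] at h

end NegativeBinomial

section Gamma

theorem Real.Gamma_add_nat_eq_prod_mul {a : ℝ} (ha : 0 < a) (n : ℕ) :
    Real.Gamma (a + n) = (∏ j ∈ range n, (a + j)) * Real.Gamma a := by
  induction n with
  | zero => simp
  | succ n ih =>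
    rw [Nat.cast_succ, ← add_assoc, Real.Gamma_add_one (by positivity), ih, prod_range_succ]
    ring

noncomputable def gammaDensity (a θ x : ℝ) : ℝ :=
  if 0 < x then (Real.Gamma a)⁻¹ * θ ^ (-a) * x ^ (a - 1) * Real.exp (-x / θ) else 0

theorem gammaDensity_nonneg {a θ : ℝ} (ha : 0 < a) (hθ : 0 < θ) (x : ℝ) :
    0 ≤ gammaDensity a θ x := by
  unfold gammaDensity
  split_ifs
  · have := Real.Gamma_pos_of_pos ha
    positivity
  · exact le_rfl

theorem measurable_gammaDensity (a θ : ℝ) : Measurable (gammaDensity a θ) :=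
  Measurable.ite measurableSet_Ioi (by fun_prop) measurable_const

theorem integral_pow_withDensity_gammaDensity {a θ : ℝ} (ha : 0 < a) (hθ : 0 < θ) (n : ℕ) :
    ∫ x, x ^ n ∂volume.withDensity (fun x => ENNReal.ofReal (gammaDensity a θ x)) =
      θ ^ n * ∏ j ∈ range n, (a + j) := by
  rw [integral_withDensity_eq_integral_toReal_smul (measurable_gammaDensity a θ).ennreal_ofReal
    (ae_of_all _ fun _ => ENNReal.ofReal_lt_top)]
  simp_rw [ENNReal.toReal_ofReal (gammaDensity_nonneg ha hθ _), smul_eq_mul]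
  rw [← setIntegral_eq_integral_of_forall_compl_eq_zero (s := Set.Ioi 0)
    fun x hx => by simp [gammaDensity, show ¬ 0 < x from hx]]
  have hintegrand : Set.EqOn (fun x => gammaDensity a θ x * x ^ n)
      (fun x => ((Real.Gamma a)⁻¹ * θ ^ (-a)) * (x ^ (a + n - 1) * Real.exp (-(θ⁻¹ * x))))
      (Set.Ioi 0) := by
    intro x (hx : 0 < x)
    simp only [gammaDensity, if_pos hx]
    rw [add_sub_right_comm, Real.rpow_add hx, Real.rpow_natCast]
    ring_nf
  rw [setIntegral_congr_fun measurableSet_Ioi hintegrand, integral_const_mul,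
    Real.integral_rpow_mul_exp_neg_mul_Ioi (by positivity) (by positivity),
    Real.Gamma_add_nat_eq_prod_mul ha, one_div, inv_inv, Real.rpow_add hθ, Real.rpow_natCast,
    Real.rpow_neg hθ.le]
  have := (Real.Gamma_pos_of_pos ha).ne'
  have := (Real.rpow_pos_of_pos hθ a).ne'
  field_simp

end Gamma

section Moments

variable {α β σ : ℝ}

theorem muM_self :
    muM α α σ = volume.withDensity fun x => ENNReal.ofReal (gammaDensity (σ / (α * α)) α x) :=
  if_pos rfl

theorem muM_of_ne (h : α ≠ β) :
    muM α β σ = Measure.sum fun m : ℕ =>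
      ENNReal.ofReal (negBinomialWeight (σ / (α * β)) (β / α) m) • Measure.dirac ((α - β) * m) :=
  if_neg h

theorem integral_pow_muM_self (hα : 0 < α) (hσ : 0 < σ) (n : ℕ) :
    ∫ x, x ^ n ∂muM α α σ = ∏ j ∈ range n, (σ / α + j * α) := by
  rw [muM_self, integral_pow_withDensity_gammaDensity (by positivity) hα, ← div_div,
    pow_mul_prod_range_div_add hα.ne']

theorem integral_muM_of_lt (hβ : 0 < β) (hβα : β < α) (hσ : 0 < σ) (f : ℝ → ℝ) :
    ∫ x, f x ∂muM α β σ =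
      ∑' m : ℕ, negBinomialWeight (σ / (α * β)) (β / α) m * f ((α - β) * m) := by
  have hα : 0 < α := hβ.trans hβα
  have hweight : ∀ m, 0 ≤ negBinomialWeight (σ / (α * β)) (β / α) m :=
    negBinomialWeight_nonneg (by positivity) (by positivity) ((div_le_one hα).2 hβα.le)
  rw [muM_of_ne hβα.ne', integral_sum_dirac fun _ => ENNReal.ofReal_ne_top]
  simp_rw [ENNReal.toReal_ofReal (hweight _), smul_eq_mul]

theorem hasSum_negBinomialWeight_muM_mul_prod_sub (hβ : 0 < β) (hβα : β < α) (k : ℕ) :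
    HasSum (fun m : ℕ => negBinomialWeight (σ / (α * β)) (β / α) m *
        ((α - β) ^ k * ∏ j ∈ range k, ((m : ℝ) - j)))
      (∏ j ∈ range k, (σ / α + j * β)) := by
  have hα : 0 < α := hβ.trans hβα
  have hp : |β / α| < 1 := by
    rw [abs_of_pos (by positivity)]
    exact (div_lt_one hα).2 hβα
  have h := (hasSum_negBinomialWeight_mul_prod_sub (σ / (α * β)) hp k).mul_left ((α - β) ^ k)
  have hvalue : (α - β) ^ k * ((β / α / (1 - β / α)) ^ k * ∏ j ∈ range k, (σ / (α * β) + j)) =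
      ∏ j ∈ range k, (σ / α + j * β) := by
    have hodds : β / α / (1 - β / α) = β / (α - β) := by
      field_simp
    rw [hodds, ← mul_assoc, ← mul_pow, mul_div_cancel₀ _ (sub_pos.2 hβα).ne', ← div_div,
      pow_mul_prod_range_div_add hβ.ne']
  rw [hvalue] at h
  exact h.congr_fun fun m => mul_left_comm _ _ _

end Moments

theorem stmt_7 (α β σ : ℝ) (hβ : 0 < β) (hαβ : β ≤ α) (hσ : 0 < σ)
    (S : ℕ → ℕ → ℝ)
    (hS : ∀ n, 1 ≤ n → ∀ z : ℝ,
      z ^ n = ∑ k ∈ Finset.Icc 1 n, S n k * ∏ j ∈ Finset.range k, (z - j))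
    (n : ℕ) (hn : 1 ≤ n) :
    ∫ x, x ^ n ∂(muM α β σ) =
      ∑ k ∈ Finset.Icc 1 n, (α - β) ^ (n - k) * S n k * ∏ j ∈ Finset.range k, (σ / α + j * β) := by
  rcases hαβ.eq_or_lt with rfl | hβα
  · rw [integral_pow_muM_self hβ hσ, sum_eq_single_of_mem n (mem_Icc.2 ⟨hn, le_rfl⟩),
      Nat.sub_self, pow_zero, one_mul, eq_one_of_pow_eq_sum_mul_prod_sub hn (hS n hn), one_mul]
    intro k hk hkn
    rw [sub_self, zero_pow (Nat.sub_ne_zero_of_lt (lt_of_le_of_ne (mem_Icc.1 hk).2 hkn)),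
      zero_mul, zero_mul]
  · rw [integral_muM_of_lt hβ hβα hσ]
    refine HasSum.tsum_eq ?_
    refine (hasSum_sum fun k (_ : k ∈ Icc 1 n) =>
      (hasSum_negBinomialWeight_muM_mul_prod_sub hβ hβα k).mul_left
        ((α - β) ^ (n - k) * S n k)).congr_fun fun m => ?_
    rw [mul_pow, hS n hn m, mul_sum, mul_sum]
    refine sum_congr rfl fun k hk => ?_
    rw [← pow_sub_mul_pow (α - β) (mem_Icc.1 hk).2]
    ring
end

section
/- Let $\sigma > 0$, $\alpha,\beta \in \mathbb{C}\setminus\{0\}$, and let $(p_n)_{n\geq 0}$ be the monic polynomial sequence satisfying $z p_n(z) = p_{n+1}(z) + ((\alpha+\beta)n + \sigma/\alpha)p_n(z) + (\sigma n + \alpha\beta n(n-1))p_{n-1}(z)$. Let $\Phi: \mathcal{P}(\mathbb{C}) \to \mathbb{C}$ be the linear functional with $\Phi(1)=1$ and $\Phi(p_n)=0$ for $n\geq 1$. Then $\Phi(z^n) = \sum_{k=1}^n (\alpha-\beta)^{n-k} S(n,k)\,(\sigma/\alpha \mid -\beta)_k$. -/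
/-!
Write `(z | h)_k = ∏_{j<k} (z - j h)` with `h = α - β` and `c = σ / α`. By induction on `k`,
using the three-term recurrence and Pascal-type identities for the coefficients,
`(z | h)_k = ∑_{m + d = k} C(k, m) ∏_{i<d} (c + (m + i) β) p_m(z)`,
so `Φ ((z | h)_k) = ∏_{j<k} (c + j β)`. Rescaling the Stirling expansion of `z ^ n` turns it into
`z ^ n = ∑_k h ^ (n - k) S(n, k) (z | h)_k`, and applying `Φ` gives the formula.
-/

open Polynomial Finset

variable {R : Type*} [CommRing R]

noncomputable def fallingPoly (h : R) (k : ℕ) : R[X] := ∏ j ∈ range k, (X - C (j * h))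

/-- The coefficient of `p m` in the expansion of `fallingPoly (α - β) (m + d)`. -/
def connectionCoeff (β c : R) (m d : ℕ) : R :=
  ((m + d).choose m : R) * ∏ i ∈ range d, (c + (m + i) * β)

lemma cast_choose_mul_succ_eq (m d : ℕ) :
    ((m + d + 1).choose m * (d + 1) : R) = (m + d + 1).choose (m + 1) * (m + 1) := by
  have h := congrArg (Nat.cast : ℕ → R) (Nat.choose_succ_right_eq (m + d + 1) m)
  rw [show m + d + 1 - m = d + 1 by omega] at h
  push_cast at h
  exact h.symm

lemma prod_range_succ_shift (β c : R) (m d : ℕ) :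
    ∏ i ∈ range (d + 1), (c + ((m : R) + i) * β) =
      (c + m * β) * ∏ i ∈ range d, (c + ((m : R) + 1 + i) * β) := by
  rw [prod_range_succ', mul_comm, Nat.cast_zero, add_zero]
  congr 1
  exact prod_congr rfl fun i _ => by push_cast; ring

namespace connectionCoeff

variable (β c : R) (m d : ℕ)

@[simp] lemma zero_right : connectionCoeff β c m 0 = 1 := by
  simp [connectionCoeff]

lemma zero_succ : connectionCoeff β c 0 (d + 1) = connectionCoeff β c 0 d * (c + d * β) := by
  simp [connectionCoeff, prod_range_succ]

lemma succ_succ : connectionCoeff β c (m + 1) (d + 1) =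
    connectionCoeff β c m (d + 1) + connectionCoeff β c (m + 1) d * (c + (2 * m + d + 2) * β) := by
  have hpascal : ((m + 1 + (d + 1)).choose (m + 1) : R) =
      (m + d + 1).choose m + (m + d + 1).choose (m + 1) := by
    rw [show m + 1 + (d + 1) = m + d + 1 + 1 by omega, Nat.choose_succ_succ]; push_cast; ring
  simp only [connectionCoeff, Nat.cast_succ, prod_range_succ_shift,
    prod_range_succ (fun i => c + ((m : R) + 1 + i) * β), hpascal,
    show m + (d + 1) = m + d + 1 by omega, show m + 1 + d = m + d + 1 by omega]
  linear_combination β * (∏ i ∈ range d, (c + ((m : R) + 1 + i) * β)) *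
    cast_choose_mul_succ_eq (R := R) m d

lemma succ_mul_succ : (m + 1) * (c + m * β) * connectionCoeff β c (m + 1) d =
    (d + 1) * connectionCoeff β c m (d + 1) := by
  simp only [connectionCoeff, Nat.cast_succ, prod_range_succ_shift,
    show m + (d + 1) = m + d + 1 by omega, show m + 1 + d = m + d + 1 by omega]
  linear_combination -(c + m * β) * (∏ i ∈ range d, (c + ((m : R) + 1 + i) * β)) *
    cast_choose_mul_succ_eq (R := R) m d

end connectionCoeff

section AntidiagonalSums

variable {M : Type*} [AddCommGroup M] [Module R M] (α β c : R) (f : ℕ → M)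

open Finset.Nat in
lemma sum_antidiagonal_connectionCoeff_lower (k : ℕ) :
    ∑ x ∈ antidiagonal k, (connectionCoeff β c x.1 x.2 * (α * c * x.1 + α * β * x.1 * (x.1 - 1))) •
        (if x.1 = 0 then 0 else f (x.1 - 1)) =
      ∑ x ∈ antidiagonal k, (α * x.2 * connectionCoeff β c x.1 x.2) • f x.1 := by
  cases k with
  | zero => simp
  | succ k =>
    rw [sum_antidiagonal_succ, sum_antidiagonal_succ']
    simp only [Nat.succ_ne_zero, if_false, Nat.add_sub_cancel, zero_add,
      Nat.cast_zero, mul_zero, zero_mul, zero_smul]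
    refine sum_congr rfl fun x _ => congrArg (· • f x.1) ?_
    push_cast
    linear_combination α * connectionCoeff.succ_mul_succ β c x.1 x.2

open Finset.Nat in
lemma sum_antidiagonal_succ_connectionCoeff (k : ℕ) :
    ∑ x ∈ antidiagonal (k + 1), connectionCoeff β c x.1 x.2 • f x.1 =
      ∑ x ∈ antidiagonal k, connectionCoeff β c x.1 x.2 • f (x.1 + 1) +
        ∑ x ∈ antidiagonal k,
          (connectionCoeff β c x.1 x.2 * (c + (2 * x.1 + x.2) * β)) • f x.1 := by
  have hsplit : ∀ x ∈ antidiagonal (k + 1), connectionCoeff β c x.1 x.2 • f x.1 =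
      (if x.1 = 0 then 0 else connectionCoeff β c (x.1 - 1) x.2 • f x.1) +
        (if x.2 = 0 then 0 else
          (connectionCoeff β c x.1 (x.2 - 1) * (c + (2 * x.1 + (x.2 - 1 : ℕ)) * β)) • f x.1) := by
    rintro ⟨_ | m, _ | d⟩ hx
    · simp at hx
    · simp [connectionCoeff.zero_succ]
    · simp
    · simp only [Nat.succ_ne_zero, if_false, Nat.add_sub_cancel, ← add_smul]
      rw [connectionCoeff.succ_succ]
      congr 1
      push_cast
      ring
  rw [sum_congr rfl hsplit, sum_add_distrib, sum_antidiagonal_succ, sum_antidiagonal_succ']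
  simp

end AntidiagonalSums

lemma fallingPoly_eq_sum_antidiagonal {α β c : R} {p : ℕ → R[X]} (hp0 : p 0 = 1)
    (hrec : ∀ n : ℕ, X * p n = p (n + 1) + C ((α + β) * n + c) * p n
      + C (α * c * n + α * β * n * (n - 1)) * (if n = 0 then 0 else p (n - 1)))
    (k : ℕ) :
    fallingPoly (α - β) k = ∑ x ∈ antidiagonal k, connectionCoeff β c x.1 x.2 • p x.1 := by
  induction k with
  | zero => simp [fallingPoly, hp0]
  | succ k ih =>
    have hstep : ∀ x ∈ antidiagonal k,
        (connectionCoeff β c x.1 x.2 • p x.1) * (X - C (k * (α - β))) =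
          connectionCoeff β c x.1 x.2 • p (x.1 + 1) +
            (connectionCoeff β c x.1 x.2 * (c + (2 * x.1 + x.2) * β)) • p x.1 +
            ((connectionCoeff β c x.1 x.2 * (α * c * x.1 + α * β * x.1 * (x.1 - 1))) •
                (if x.1 = 0 then 0 else p (x.1 - 1)) -
              (α * x.2 * connectionCoeff β c x.1 x.2) • p x.1) := by
      rintro ⟨m, d⟩ hx
      obtain rfl : m + d = k := by simpa using hx
      have hm := hrec m
      simp only [← C_mul', map_add, map_sub, map_mul, map_natCast, map_ofNat, map_one,
        Nat.cast_add] at hm ⊢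
      linear_combination C (connectionCoeff β c m d) * hm
    rw [fallingPoly, prod_range_succ, ← fallingPoly, ih, sum_mul, sum_congr rfl hstep,
      sum_add_distrib, sum_add_distrib, sum_sub_distrib, sum_antidiagonal_connectionCoeff_lower,
      sub_self, add_zero, sum_antidiagonal_succ_connectionCoeff]

lemma map_fallingPoly {α β c : R} {p : ℕ → R[X]} (hp0 : p 0 = 1)
    (hrec : ∀ n : ℕ, X * p n = p (n + 1) + C ((α + β) * n + c) * p n
      + C (α * c * n + α * β * n * (n - 1)) * (if n = 0 then 0 else p (n - 1)))
    (Φ : R[X] →ₗ[R] R) (hΦ1 : Φ 1 = 1) (hΦ : ∀ n, 1 ≤ n → Φ (p n) = 0) (k : ℕ) :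
    Φ (fallingPoly (α - β) k) = ∏ j ∈ range k, (c + j * β) := by
  rw [fallingPoly_eq_sum_antidiagonal hp0 hrec, map_sum,
    sum_eq_single_of_mem (0, k) (mem_antidiagonal.2 (zero_add k))]
  · simp [hp0, hΦ1, connectionCoeff]
  · rintro ⟨m, d⟩ _ hne
    have hm : 1 ≤ m := Nat.one_le_iff_ne_zero.2 fun hm0 => hne (by simp_all)
    rw [map_smul, hΦ m hm, smul_zero]

lemma X_pow_eq_sum_smul_fallingPoly {n : ℕ} {s : ℕ → ℂ}
    (hs : ∀ z : ℂ, z ^ n = ∑ k ∈ Icc 1 n, s k * ∏ j ∈ range k, (z - j)) (h : ℂ) :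
    (X ^ n : ℂ[X]) = ∑ k ∈ Icc 1 n, (h ^ (n - k) * s k) • fallingPoly h k := by
  refine Polynomial.funext fun z => ?_
  simp only [eval_pow, eval_X, eval_finsetSum, eval_smul, smul_eq_mul, fallingPoly, eval_prod,
    eval_sub, eval_C]
  -- Rescaling `hs` by `h` gives the identity for `h ≠ 0`; continuity in `h` covers `h = 0`.
  have hscaled : Set.EqOn (fun _ => z ^ n)
      (fun h : ℂ => ∑ k ∈ Icc 1 n, h ^ (n - k) * s k * ∏ j ∈ range k, (z - j * h)) {0}ᶜ := by
    intro t (ht : t ≠ 0)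
    calc z ^ n = t ^ n * (z / t) ^ n := by rw [div_pow, mul_div_cancel₀ _ (pow_ne_zero n ht)]
      _ = ∑ k ∈ Icc 1 n, t ^ (n - k) * s k * ∏ j ∈ range k, (z - j * t) := by
        rw [hs (z / t), mul_sum]
        refine sum_congr rfl fun k hk => ?_
        have hprod : t ^ k * ∏ j ∈ range k, (z / t - j) = ∏ j ∈ range k, (z - j * t) :=
          calc t ^ k * ∏ j ∈ range k, (z / t - j) = ∏ j ∈ range k, t * (z / t - j) := by
                rw [← pow_card_mul_prod, card_range]
            _ = ∏ j ∈ range k, (z - j * t) := prod_congr rfl fun j _ => by field_simp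
        rw [← hprod, ← Nat.sub_add_cancel (mem_Icc.1 hk).2, pow_add, Nat.add_sub_cancel]
        ring
  exact congrFun (Continuous.ext_on (dense_compl_singleton 0) continuous_const (by fun_prop)
    hscaled) h

theorem stmt_10_general (σ : ℝ) (α β : ℂ) (hα : α ≠ 0)
    (p : ℕ → Polynomial ℂ) (hp0 : p 0 = 1)
    (hrec : ∀ n : ℕ, Polynomial.X * p n =
      p (n + 1) + Polynomial.C ((α + β) * n + σ / α) * p n
        + Polynomial.C (σ * n + α * β * n * (n - 1)) * (if n = 0 then 0 else p (n - 1)))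
    (Φ : Polynomial ℂ →ₗ[ℂ] ℂ) (hΦ1 : Φ 1 = 1) (hΦ : ∀ n, 1 ≤ n → Φ (p n) = 0)
    (S : ℕ → ℕ → ℂ)
    (hS : ∀ n, 1 ≤ n → ∀ z : ℂ,
      z ^ n = ∑ k ∈ Finset.Icc 1 n, S n k * ∏ j ∈ Finset.range k, (z - j))
    (n : ℕ) (hn : 1 ≤ n) :
    Φ (Polynomial.X ^ n) =
      ∑ k ∈ Finset.Icc 1 n, (α - β) ^ (n - k) * S n k *
        ∏ j ∈ Finset.range k, ((σ : ℂ) / α + j * β) := by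
  have hσ : α * ((σ : ℂ) / α) = σ := mul_div_cancel₀ _ hα
  have hrec' : ∀ n : ℕ, X * p n = p (n + 1) + C ((α + β) * n + σ / α) * p n
      + C (α * (σ / α) * n + α * β * n * (n - 1)) * (if n = 0 then 0 else p (n - 1)) := by
    simpa only [hσ] using hrec
  rw [X_pow_eq_sum_smul_fallingPoly (hS n hn) (α - β), map_sum]
  refine sum_congr rfl fun k _ => ?_
  rw [map_smul, map_fallingPoly hp0 hrec' Φ hΦ1 hΦ, smul_eq_mul]

theorem stmt_10 (σ : ℝ) (hσ : 0 < σ) (α β : ℂ) (hα : α ≠ 0) (hβ : β ≠ 0)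
    (p : ℕ → Polynomial ℂ) (hp0 : p 0 = 1)
    (hrec : ∀ n : ℕ, Polynomial.X * p n =
      p (n + 1) + Polynomial.C ((α + β) * n + σ / α) * p n
        + Polynomial.C (σ * n + α * β * n * (n - 1)) * (if n = 0 then 0 else p (n - 1)))
    (Φ : Polynomial ℂ →ₗ[ℂ] ℂ) (hΦ1 : Φ 1 = 1) (hΦ : ∀ n, 1 ≤ n → Φ (p n) = 0)
    (S : ℕ → ℕ → ℂ)
    (hS : ∀ n, 1 ≤ n → ∀ z : ℂ,
      z ^ n = ∑ k ∈ Finset.Icc 1 n, S n k * ∏ j ∈ Finset.range k, (z - j))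
    (n : ℕ) (hn : 1 ≤ n) :
    Φ (Polynomial.X ^ n) =
      ∑ k ∈ Finset.Icc 1 n, (α - β) ^ (n - k) * S n k *
        ∏ j ∈ Finset.range k, ((σ : ℂ) / α + j * β) :=
  stmt_10_general σ α β hα p hp0 hrec Φ hΦ1 hΦ S hS n hn
end

section
/- Let $\sigma > 0$, $\alpha,\beta \in \mathbb{C}\setminus\{0\}$. Define the operators $\mathcal{U} = Z + \sigma/\alpha$ and $\mathcal{V} = \alpha D_\beta + 1$ on the space of polynomials, where $Z$ is multiplication by $z$ and $(D_\beta f)(z) = (f(z+\beta)-f(z))/\beta$. Then with $\mathcal{R} = \mathcal{U}\mathcal{V}$, for every $n \geq 1$: $(\mathcal{R}^n 1)(z) = \sum_{k=1}^{n}(\alpha-\beta)^{n-k} S(n,k)\,(z + \sigma/\alpha \mid -\beta)_k$. -/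
open Polynomial

/-- The `β`-difference operator `(D_β f)(z) = (f(z+β) - f(z))/β` on polynomials. -/
noncomputable def Dop (β : ℂ) (p : Polynomial ℂ) : Polynomial ℂ :=
  C β⁻¹ * (p.comp (X + C β) - p)

/-- `𝒰 = Z + σ/α`. -/
noncomputable def Uop (σ α : ℂ) (p : Polynomial ℂ) : Polynomial ℂ := X * p + C (σ / α) * p

/-- `𝒱 = α D_β + 1`. -/
noncomputable def Vop (α β : ℂ) (p : Polynomial ℂ) : Polynomial ℂ := C α * Dop β p + p

/-!
A linear operator `T` with `T vₖ = vₖ₊₁ + k a vₖ` on a sequence `v₀, v₁, …` satisfies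
`Tⁿ v₀ = ∑ₖ a^(n-k) S(n,k) vₖ`: this is exactly the Stirling recurrence
`S(n+1,k+1) = (k+1) S(n,k+1) + S(n,k)`. Multiplication by `X` on the falling factorials (`a = 1`)
gives the classical expansion `Xⁿ = ∑ₖ S(n,k) (X)ₖ`; falling factorials are triangular on the
natural numbers, so this expansion is unique, which identifies the `S n k` of the statement with
the Stirling numbers. For `𝓡 = 𝓤𝓥` and `vₖ = (z + c | -β)ₖ` with `c = σ/α` one gets `a = α - β`:
`D_β` lowers `vₖ` to `k (z + c + β | -β)ₖ₋₁`, so `(z + c) D_β vₖ = k vₖ`, while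
`(z + c) vₖ = vₖ₊₁ - k β vₖ`.
-/

open Finset Nat

theorem iterate_eq_sum_stirlingSecond_smul {R M : Type*} [CommSemiring R] [AddCommMonoid M]
    [Module R M] (T : M →ₗ[R] M) (a : R) (v : ℕ → M)
    (hv : ∀ k, T (v k) = v (k + 1) + (k * a) • v k) (n : ℕ) :
    T^[n] (v 0) = ∑ k ∈ range (n + 1), (a ^ (n - k) * stirlingSecond n k) • v k := by
  induction n with
  | zero => simp
  | succ n ih =>
    rw [Function.iterate_succ_apply', ih, map_sum]
    simp only [map_smul, hv, smul_add, smul_smul, sum_add_distrib]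
    rw [sum_range_succ' _ (n + 1)]
    simp only [stirlingSecond_succ_succ, stirlingSecond_succ_zero, cast_zero, mul_zero,
      zero_smul, add_zero, cast_add, cast_mul, cast_one, mul_add, add_smul, sum_add_distrib,
      Nat.add_sub_add_right]
    rw [add_comm]
    congr 1
    rw [sum_range_succ' _ n, sum_range_succ _ n, stirlingSecond_eq_zero_of_lt n.lt_succ_self]
    simp only [cast_zero, mul_zero, zero_mul, zero_smul, add_zero]
    refine sum_congr rfl fun k hk => ?_
    rw [show n - k = n - (k + 1) + 1 by have := mem_range.mp hk; omega]
    push_cast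
    ring_nf

theorem X_pow_eq_sum_stirlingSecond_smul_descPochhammer (R : Type*) [CommRing R] (n : ℕ) :
    (X : R[X]) ^ n = ∑ k ∈ range (n + 1), (stirlingSecond n k : R) • descPochhammer R k := by
  have hX : ∀ k, X * descPochhammer R k
      = descPochhammer R (k + 1) + ((k : R) * 1) • descPochhammer R k := fun k => by
    rw [descPochhammer_succ_right, mul_one, smul_eq_C_mul, ← C_eq_natCast]; ring
  have h := iterate_eq_sum_stirlingSecond_smul (LinearMap.mulLeft R X) 1 _ hX n
  rw [descPochhammer_zero, show ⇑(LinearMap.mulLeft R X) = (X * ·) from rfl,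
    mul_left_iterate_apply_one] at h
  simpa only [one_pow, one_mul] using h

theorem eq_zero_of_sum_mul_descPochhammer_eval_natCast {R : Type*} [CommRing R] [IsDomain R]
    [CharZero R] (s : Finset ℕ) (c : ℕ → R)
    (h : ∀ m : ℕ, ∑ k ∈ s, c k * (descPochhammer R k).eval (m : R) = 0) :
    ∀ k ∈ s, c k = 0 := by
  intro k
  induction k using Nat.strong_induction_on with
  | _ k ih =>
    intro hk
    -- at `m = k` the terms with index above `k` vanish, those below `k` by induction
    have hsum := h k
    rw [sum_eq_single_of_mem k hk fun m hm hmk => ?_] at hsum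
    · simpa [descPochhammer_eval_eq_descFactorial, descFactorial_self, factorial_ne_zero]
        using hsum
    · rcases lt_or_gt_of_ne hmk with hlt | hgt
      · rw [ih m hlt hm, zero_mul]
      · rw [descPochhammer_eval_eq_descFactorial, descFactorial_eq_zero_iff_lt.mpr hgt,
          cast_zero, mul_zero]

theorem stirlingSecond_zero_right_of_pos {n : ℕ} (hn : 1 ≤ n) : stirlingSecond n 0 = 0 := by
  obtain ⟨m, rfl⟩ := Nat.exists_eq_add_of_le' hn
  rfl

theorem sum_range_succ_eq_sum_Icc_of_eq_zero {M : Type*} [AddCommMonoid M] {f : ℕ → M}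
    (h0 : f 0 = 0) (n : ℕ) : ∑ k ∈ range (n + 1), f k = ∑ k ∈ Icc 1 n, f k := by
  refine (sum_subset (fun k hk => by simp at hk ⊢; omega) fun k hk hk' => ?_).symm
  obtain rfl : k = 0 := by simp at hk hk'; omega
  exact h0

theorem eq_stirlingSecond_of_pow_eq_sum_s11 {R : Type*} [CommRing R] [IsDomain R] [CharZero R]
    {n : ℕ} (hn : 1 ≤ n) (c : ℕ → R)
    (hc : ∀ z : R, z ^ n = ∑ k ∈ Icc 1 n, c k * ∏ j ∈ range k, (z - j)) :
    ∀ k ∈ Icc 1 n, c k = stirlingSecond n k := by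
  have hexp (z : R) :
      z ^ n = ∑ k ∈ Icc 1 n, (stirlingSecond n k : R) * ∏ j ∈ range k, (z - j) := by
    have h := congrArg (eval z) (X_pow_eq_sum_stirlingSecond_smul_descPochhammer R n)
    simp only [eval_pow, eval_X, eval_finsetSum, eval_smul, descPochhammer_eval_eq_prod_range,
      smul_eq_mul] at h
    rw [h, sum_range_succ_eq_sum_Icc_of_eq_zero (by simp [stirlingSecond_zero_right_of_pos hn])]
  intro k hk
  refine sub_eq_zero.mp (eq_zero_of_sum_mul_descPochhammer_eval_natCast _
    (fun k => c k - stirlingSecond n k) (fun m => ?_) k hk)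
  simp only [sub_mul, sum_sub_distrib, descPochhammer_eval_eq_prod_range, ← hc, ← hexp, sub_self]

/-- `genFactorial c β k` is the paper's generalized factorial `(X + c | -β)ₖ`. -/
noncomputable def genFactorial {R : Type*} [CommRing R] (c β : R) (k : ℕ) : R[X] :=
  ∏ j ∈ range k, (X + C (c + j * β))

section genFactorial

variable {R : Type*} [CommRing R] (c β : R) (k : ℕ)

@[simp]
theorem genFactorial_zero : genFactorial c β 0 = 1 := prod_range_zero _

theorem genFactorial_succ :
    genFactorial c β (k + 1) = genFactorial c β k * (X + C (c + k * β)) :=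
  prod_range_succ _ _

theorem genFactorial_succ' :
    genFactorial c β (k + 1) = (X + C c) * genFactorial (c + β) β k := by
  rw [genFactorial, prod_range_succ', mul_comm, genFactorial]
  simp only [cast_zero, zero_mul, add_zero, cast_succ]
  congr 1
  exact prod_congr rfl fun j _ => by ring_nf

theorem genFactorial_comp_X_add_C :
    (genFactorial c β k).comp (X + C β) = genFactorial (c + β) β k := by
  simp only [genFactorial, Polynomial.prod_comp, add_comp, X_comp, C_comp]
  exact prod_congr rfl fun j _ => by rw [add_assoc, ← C_add]; ring_nf

theorem eval_genFactorial (z : R) :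
    (genFactorial c β k).eval z = ∏ j ∈ range k, (z + c + j * β) := by
  simp only [genFactorial, eval_prod, eval_add, eval_X, eval_C, add_assoc]

end genFactorial

noncomputable def Rop (σ α β : ℂ) : ℂ[X] →ₗ[ℂ] ℂ[X] where
  toFun p := Uop σ α (Vop α β p)
  map_add' p q := by simp only [Uop, Vop, Dop, add_comp]; ring
  map_smul' r p := by simp only [Uop, Vop, Dop, smul_eq_C_mul, mul_comp, C_comp,
    RingHom.id_apply]; ring

theorem Rop_genFactorial (σ α : ℂ) {β : ℂ} (hβ : β ≠ 0) (k : ℕ) :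
    Rop σ α β (genFactorial (σ / α) β k)
      = genFactorial (σ / α) β (k + 1) + (k * (α - β)) • genFactorial (σ / α) β k := by
  have hinv : C β⁻¹ * C β = 1 := by rw [← C_mul, inv_mul_cancel₀ hβ, C_1]
  have e1 := genFactorial_succ' (σ / α) β k
  have e2 := genFactorial_succ (σ / α) β k
  simp only [Rop, LinearMap.coe_mk, AddHom.coe_mk, Uop, Vop, Dop, genFactorial_comp_X_add_C,
    smul_eq_C_mul, map_add, map_mul, map_sub, map_natCast] at e2 ⊢
  linear_combination -(C α * C β⁻¹) * e1 + (C α * C β⁻¹ - 1) * e2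
    + (k * C α * genFactorial (σ / α) β k) * hinv

theorem stmt_11_general (σ : ℝ) (α β : ℂ) (hβ : β ≠ 0)
    (S : ℕ → ℕ → ℂ)
    (hS : ∀ n, 1 ≤ n → ∀ z : ℂ,
      z ^ n = ∑ k ∈ Finset.Icc 1 n, S n k * ∏ j ∈ Finset.range k, (z - j))
    (n : ℕ) (hn : 1 ≤ n) (z : ℂ) :
    (((fun p => Uop (σ : ℂ) α (Vop α β p))^[n]) 1).eval z =
      ∑ k ∈ Finset.Icc 1 n, (α - β) ^ (n - k) * S n k *
        ∏ j ∈ Finset.range k, (z + (σ : ℂ) / α + j * β) := by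
  have hiter := iterate_eq_sum_stirlingSecond_smul (Rop σ α β) (α - β) (genFactorial (σ / α) β)
    (Rop_genFactorial σ α hβ) n
  rw [genFactorial_zero] at hiter
  change ((Rop σ α β)^[n] 1).eval z = _
  rw [hiter, eval_finsetSum, sum_range_succ_eq_sum_Icc_of_eq_zero
    (by simp [stirlingSecond_zero_right_of_pos hn])]
  refine sum_congr rfl fun k hk => ?_
  rw [eval_smul, eval_genFactorial, smul_eq_mul,
    eq_stirlingSecond_of_pow_eq_sum_s11 hn (S n) (hS n hn) k hk]

theorem stmt_11 (σ : ℝ) (hσ : 0 < σ) (α β : ℂ) (hα : α ≠ 0) (hβ : β ≠ 0)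
    (S : ℕ → ℕ → ℂ)
    (hS : ∀ n, 1 ≤ n → ∀ z : ℂ,
      z ^ n = ∑ k ∈ Finset.Icc 1 n, S n k * ∏ j ∈ Finset.range k, (z - j))
    (n : ℕ) (hn : 1 ≤ n) (z : ℂ) :
    (((fun p => Uop (σ : ℂ) α (Vop α β p))^[n]) 1).eval z =
      ∑ k ∈ Finset.Icc 1 n, (α - β) ^ (n - k) * S n k *
        ∏ j ∈ Finset.range k, (z + (σ : ℂ) / α + j * β) :=
  stmt_11_general σ α β hβ S hS n hn z
end

section
/- Let $(s_n)$ be a monic polynomial sequence satisfying the recurrence $x s_n(x) = s_{n+1}(x) + (\lambda n + l)s_n(x) + (\sigma n + \eta n(n-1))s_{n-1}(x)$ with $\lambda = \alpha+\beta$, $\eta = \alpha\beta$, $l = \sigma/\alpha$, $\alpha \geq \beta > 0$. Then with $U = \partial^+ + \beta\partial^+\partial^- + \sigma/\alpha$ and $V = \alpha\partial^- + 1$, the operator of multiplication by $x$ on polynomials equals $UV$. -/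
lemma span_aux_14 (s : ℕ → Polynomial ℂ) (hmonic : ∀ n, (s n).Monic)
    (hdeg : ∀ n, (s n).natDegree = n) :
    Submodule.span ℂ (Set.range s) = ⊤ := by
  rw [eq_top_iff]
  have key : ∀ n, ∀ p : Polynomial ℂ, p.natDegree ≤ n →
      p ∈ Submodule.span ℂ (Set.range s) := by
    intro n
    induction n with
    | zero =>
        intro p hp
        have hs0 : s 0 = 1 := by
          have := (hmonic 0).natDegree_eq_zero.mp (hdeg 0)
          exact this
        have : p = p.coeff 0 • s 0 := by
          rw [hs0]
          simp only [Polynomial.smul_eq_C_mul, mul_one]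
          exact Polynomial.eq_C_of_natDegree_le_zero hp
        rw [this]
        exact Submodule.smul_mem _ _ (Submodule.subset_span ⟨0, rfl⟩)
    | succ n ih =>
        intro p hp
        by_cases h : p.natDegree ≤ n
        · exact ih p h
        · have hdp : p.natDegree = n + 1 := le_antisymm hp (not_le.mp h |>.nat_succ_le)
          have hp0 : p ≠ 0 := by
            intro h0; rw [h0] at hdp; simp at hdp
          set q : Polynomial ℂ := Polynomial.C p.leadingCoeff * s (n + 1) with hq
          have hsne : s (n + 1) ≠ 0 := (hmonic (n + 1)).ne_zero
          have hlcne : p.leadingCoeff ≠ 0 := Polynomial.leadingCoeff_ne_zero.mpr hp0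
          have hdegq : q.degree = p.degree := by
            rw [hq, Polynomial.degree_C_mul hlcne, Polynomial.degree_eq_natDegree hsne,
              Polynomial.degree_eq_natDegree hp0, hdeg, hdp]
          have hlcq : p.leadingCoeff = q.leadingCoeff := by
            rw [hq, Polynomial.leadingCoeff_mul, Polynomial.leadingCoeff_C,
              (hmonic (n+1)).leadingCoeff, mul_one]
          have hsub : (p - q).degree < p.degree := Polynomial.degree_sub_lt hdegq.symm hp0 hlcq
          have hsubn : (p - q).natDegree ≤ n := by
            by_cases hz : p - q = 0
            · simp [hz]
            · have := (Polynomial.natDegree_lt_iff_degree_lt hz).mpr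
                (lt_of_lt_of_le hsub (by rw [Polynomial.degree_eq_natDegree hp0, hdp]))
              omega
          have : p = (p - q) + q := by ring
          rw [this]
          have hqmem : q ∈ Submodule.span ℂ (Set.range s) := by
            rw [hq, ← Polynomial.smul_eq_C_mul]
            exact Submodule.smul_mem _ _ (Submodule.subset_span ⟨n + 1, rfl⟩)
          exact Submodule.add_mem _ (ih _ hsubn) hqmem
  intro p _
  exact key p.natDegree p le_rfl

theorem stmt_14 (σ α β : ℝ) (hσ : 0 < σ) (hβ : 0 < β) (hαβ : β ≤ α)
    (s : ℕ → Polynomial ℂ) (hmonic : ∀ n, (s n).Monic) (hdeg : ∀ n, (s n).natDegree = n)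
    (hrec : ∀ n : ℕ, Polynomial.X * s n =
      s (n + 1) + Polynomial.C ((((α + β) * n + σ / α : ℝ)) : ℂ) * s n
        + Polynomial.C (((σ * n + (α * β) * n * (n - 1) : ℝ)) : ℂ)
            * (if n = 0 then 0 else s (n - 1)))
    (P M : Polynomial ℂ →ₗ[ℂ] Polynomial ℂ)
    (hP : ∀ n, P (s n) = s (n + 1)) (hM0 : M (s 0) = 0)
    (hM : ∀ n, M (s (n + 1)) = ((n : ℂ) + 1) • s n)
    (p : Polynomial ℂ) :
    let U : Polynomial ℂ → Polynomial ℂ :=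
      fun q => P q + (β : ℂ) • P (M q) + Polynomial.C (((σ / α : ℝ)) : ℂ) * q
    let V : Polynomial ℂ → Polynomial ℂ := fun q => (α : ℂ) • M q + q
    Polynomial.X * p = U (V p) := by
  intro U V
  have hα : (0:ℝ) < α := lt_of_lt_of_le hβ hαβ
  -- the two sides as linear maps
  set A : Polynomial ℂ →ₗ[ℂ] Polynomial ℂ := LinearMap.mulLeft ℂ Polynomial.X with hA
  set W : Polynomial ℂ →ₗ[ℂ] Polynomial ℂ :=
    (P + (β : ℂ) • (P ∘ₗ M) + LinearMap.mulLeft ℂ (Polynomial.C (((σ / α : ℝ)) : ℂ))) ∘ₗ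
      ((α : ℂ) • M + LinearMap.id) with hW
  have hUV : ∀ q, U (V q) = W q := by
    intro q
    simp [U, V, hW, LinearMap.mulLeft_apply, add_assoc]
  have hWs : ∀ n, A (s n) = W (s n) := by
    have hα0 : (α : ℂ) ≠ 0 := by exact_mod_cast ne_of_gt hα
    have hMs : ∀ m, M (s m) = (m : ℂ) • (if m = 0 then 0 else s (m - 1)) := by
      intro m
      cases m with
      | zero => simpa using hM0
      | succ k =>
          simp only [Nat.succ_ne_zero, if_false, Nat.succ_sub_one, hM k]
          push_cast
          ring_nf
    have hPif : ∀ m : ℕ, (m : ℂ) • P (if m = 0 then 0 else s (m - 1)) = (m : ℂ) • s m := by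
      intro m
      cases m with
      | zero => simp
      | succ k => simp [hP]
    have hif0 : ∀ m : ℕ, (m : ℂ) • (if m = 0 then (0 : Polynomial ℂ) else s (m - 1))
        = (m : ℂ) • s (m - 1) := by
      intro m
      cases m <;> simp
    intro n
    simp only [hA, hW, LinearMap.mulLeft_apply, LinearMap.comp_apply, LinearMap.add_apply,
      LinearMap.smul_apply, LinearMap.id_apply, map_add, map_smul]
    cases n with
    | zero =>
        rw [hrec 0]
        simp only [hMs, hPif, hP, if_true, Nat.cast_zero, zero_smul, smul_zero, map_zero,
          add_zero, zero_add, mul_zero, ite_self, reduceIte]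
    | succ k =>
        rw [hrec (k + 1)]
        simp only [hMs, map_smul, hPif, hP, Nat.succ_ne_zero, if_false, Nat.succ_sub_one]
        simp only [← Polynomial.smul_eq_C_mul]
        match_scalars <;> (push_cast; field_simp; try ring)
  have hAW : A = W := by
    apply LinearMap.ext_on (span_aux_14 s hmonic hdeg)
    rintro _ ⟨n, rfl⟩
    exact hWs n
  rw [hUV, ← hAW]
  rfl
end

section
/- Let $\eta > 0$, $\sigma > 0$. For $r > 0$ let $\nu_r(dz) = \frac{1}{\pi r}e^{-|z|^2/r}\,dA(z)$ be the Gaussian measure on $\mathbb{C}$, and let $\lambda_{\eta,\sigma}(dz) = \int_0^\infty \nu_r(dz)\,\mu_{\eta,\eta,\eta\sigma}(dr)$ be the gamma-mixture of Gaussians, where $\mu_{\eta,\eta,\eta\sigma}(dr) = \frac{1}{\Gamma(\sigma/\eta)}\eta^{-\sigma/\eta}r^{-1+\sigma/\eta}e^{-r/\eta}\,dr$. Then for all $m,n \geq 0$: $\int_{\mathbb{C}} z^m \overline{z^n}\,\lambda_{\eta,\sigma}(dz) = \delta_{m,n}\,n!\,(\sigma \mid -\eta)_n$. -/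
open MeasureTheory

/-- The Gaussian measure `ν_r(dz) = (πr)⁻¹ e^{-|z|²/r} dA(z)` on `ℂ`. -/
noncomputable def nuC (r : ℝ) : Measure ℂ :=
  volume.withDensity fun z =>
    ENNReal.ofReal ((Real.pi * r)⁻¹ * Real.exp (-‖z‖ ^ 2 / r))

/-- The gamma distribution `μ_{η,η,ησ}(dr) = Γ(σ/η)⁻¹ η^{-σ/η} r^{σ/η-1} e^{-r/η} dr`. -/
noncomputable def gammaMeas (η σ : ℝ) : Measure ℝ :=
  volume.withDensity fun r =>
    ENNReal.ofReal (if 0 < r then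
      (Real.Gamma (σ / η))⁻¹ * η ^ (-(σ / η)) * r ^ (σ / η - 1) * Real.exp (-r / η)
    else 0)

/-- The gamma-mixture of Gaussian measures `λ_{η,σ}(dz) = ∫ ν_r(dz) μ_{η,η,ησ}(dr)`. -/
noncomputable def lambdaMeas (η σ : ℝ) : Measure ℂ := (gammaMeas η σ).bind nuC

/-!
Rotation invariance kills the off-diagonal moments of each Gaussian `ν_r`: substituting `z ↦ a z`
with `|a| = 1` multiplies `∫ z ^ m * conj (z ^ n) dν_r` by `a ^ m * conj a ^ n`, which equals `-1`
for `a = exp (iπ / (m - n))`. On the diagonal, the complex Gaussian integral gives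
`∫ ‖z‖ ^ (2n) dν_r = r ^ n * n!`. The `n`-th moment of the gamma law is
`η ^ n Γ(σ/η + n) / Γ(σ/η) = ∏_{j<n} (σ + jη)`, and Fubini for the mixture is justified because
`∫ ‖z‖ ^ k dν_r = r ^ (k/2) Γ(k/2 + 1)` is integrable against the gamma law.
-/

open ProbabilityTheory

lemma MeasureTheory.Measure.integral_comp {α β : Type*} {mα : MeasurableSpace α}
    {mβ : MeasurableSpace β} {E : Type*} [NormedAddCommGroup E] [NormedSpace ℝ E]
    {κ : Kernel α β} {μ : Measure α} {f : β → E} (hf : Integrable f (κ ∘ₘ μ)) :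
    ∫ y, f y ∂(κ ∘ₘ μ) = ∫ x, ∫ y, f y ∂κ x ∂μ := by
  rw [Measure.comp_eq_comp_const_apply] at hf ⊢
  rw [Kernel.integral_comp hf, Kernel.const_apply]

lemma Real.Gamma_add_nat_eq_mul_prod {a : ℝ} (ha : ∀ k : ℕ, a + k ≠ 0) (n : ℕ) :
    Real.Gamma (a + n) = Real.Gamma a * ∏ j ∈ Finset.range n, (a + j) := by
  induction n with
  | zero => simp
  | succ n ih =>
    rw [Nat.cast_succ, ← add_assoc, Real.Gamma_add_one (ha n), ih, Finset.prod_range_succ]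
    ring

section Gaussian

variable {E : Type*} [NormedAddCommGroup E] [NormedSpace ℝ E] {r : ℝ}

lemma integral_nuC (hr : 0 ≤ r) (f : ℂ → E) :
    ∫ z, f z ∂nuC r = ∫ z, ((Real.pi * r)⁻¹ * Real.exp (-‖z‖ ^ 2 / r)) • f z := by
  rw [nuC, integral_withDensity_eq_integral_toReal_smul (by fun_prop)
    (ae_of_all _ fun _ => ENNReal.ofReal_lt_top)]
  congr with z
  rw [ENNReal.toReal_ofReal (by positivity)]

lemma integral_norm_rpow_nuC (hr : 0 < r) {s : ℝ} (hs : -2 < s) :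
    ∫ z, ‖z‖ ^ s ∂nuC r = r ^ (s / 2) * Real.Gamma (s / 2 + 1) := by
  have hdens (z : ℂ) : ((Real.pi * r)⁻¹ * Real.exp (-‖z‖ ^ 2 / r)) • ‖z‖ ^ s
      = (Real.pi * r)⁻¹ * (‖z‖ ^ s * Real.exp (-r⁻¹ * ‖z‖ ^ (2 : ℝ))) := by
    rw [smul_eq_mul, Real.rpow_two]; ring_nf
  simp_rw [integral_nuC hr.le, hdens, integral_const_mul,
    Complex.integral_rpow_mul_exp_neg_mul_rpow one_le_two hs (inv_pos.2 hr)]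
  rw [Real.inv_rpow hr.le, ← Real.rpow_neg hr.le, neg_div, neg_neg,
    show (s + 2) / 2 = s / 2 + 1 by ring, Real.rpow_add_one hr.ne']
  field_simp

lemma integrable_norm_rpow_nuC (hr : 0 < r) {s : ℝ} (hs : -2 < s) :
    Integrable (fun z : ℂ => ‖z‖ ^ s) (nuC r) := by
  refine .of_integral_ne_zero ?_
  rw [integral_norm_rpow_nuC hr hs]
  have : 0 < Real.Gamma (s / 2 + 1) := Real.Gamma_pos_of_pos (by linarith)
  positivity

lemma integral_comp_mul_circle_nuC (hr : 0 ≤ r) (a : Circle) (f : ℂ → E) :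
    ∫ z, f (a * z) ∂nuC r = ∫ z, f z ∂nuC r := by
  simp_rw [integral_nuC hr]
  have hrot := (rotation a).measurePreserving.integral_comp
    (rotation a).toHomeomorph.measurableEmbedding
    (fun z => ((Real.pi * r)⁻¹ * Real.exp (-‖z‖ ^ 2 / r)) • f z)
  simpa [rotation_apply, Circle.norm_coe] using hrot

lemma exists_circle_pow_mul_conj_pow_eq_neg_one {m n : ℕ} (hmn : m ≠ n) :
    ∃ a : Circle, (a : ℂ) ^ m * (starRingEnd ℂ) ((a : ℂ) ^ n) = -1 := by
  have hd : ((m : ℂ) - n) ≠ 0 := sub_ne_zero.2 (by exact_mod_cast hmn)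
  refine ⟨Circle.exp (Real.pi / (m - n)), ?_⟩
  rw [Circle.coe_exp, map_pow, ← Complex.exp_conj, map_mul, Complex.conj_ofReal, Complex.conj_I,
    ← Complex.exp_nat_mul, ← Complex.exp_nat_mul, ← Complex.exp_add, ← Complex.exp_pi_mul_I]
  congr 1
  push_cast
  field_simp
  ring

lemma integral_pow_mul_conj_pow_nuC (hr : 0 < r) (m n : ℕ) :
    ∫ z, z ^ m * (starRingEnd ℂ) (z ^ n) ∂nuC r
      = if m = n then ((r ^ n * n.factorial : ℝ) : ℂ) else 0 := by
  split_ifs with hmn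
  · subst hmn
    have hsq (z : ℂ) : z ^ m * (starRingEnd ℂ) (z ^ m) = ((‖z‖ ^ ((2 * m : ℕ) : ℝ) : ℝ) : ℂ) := by
      rw [Complex.mul_conj, Complex.normSq_eq_norm_sq, Real.rpow_natCast, norm_pow]
      push_cast; ring
    rw [funext hsq, integral_complex_ofReal,
      integral_norm_rpow_nuC hr (by linarith [(2 * m).cast_nonneg (α := ℝ)]), Nat.cast_mul,
      Nat.cast_two, mul_div_cancel_left₀ _ two_ne_zero, Real.rpow_natCast,
      Real.Gamma_nat_eq_factorial]
  · obtain ⟨a, ha⟩ := exists_circle_pow_mul_conj_pow_eq_neg_one hmn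
    have hrot := integral_comp_mul_circle_nuC hr.le a fun z => z ^ m * (starRingEnd ℂ) (z ^ n)
    simp only [mul_pow, map_mul] at hrot
    have hflip (z : ℂ) : (a : ℂ) ^ m * z ^ m * ((starRingEnd ℂ) ((a : ℂ) ^ n) *
        (starRingEnd ℂ) (z ^ n)) = -(z ^ m * (starRingEnd ℂ) (z ^ n)) := by
      linear_combination (z ^ m * (starRingEnd ℂ) (z ^ n)) * ha
    rw [funext hflip, integral_neg] at hrot
    linear_combination -hrot / 2

end Gaussian

section GammaDistribution

variable {η σ : ℝ}

lemma gammaMeas_ae_pos : ∀ᵐ r ∂gammaMeas η σ, 0 < r := by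
  rw [gammaMeas, ae_withDensity_iff
    (Measurable.ite measurableSet_Ioi (by fun_prop) measurable_const).ennreal_ofReal]
  refine ae_of_all _ fun r hr => ?_
  by_contra h
  simp [h] at hr

lemma integral_rpow_gammaMeas (hη : 0 < η) (hσ : 0 < σ) {s : ℝ} (hs : -(σ / η) < s) :
    ∫ r, r ^ s ∂gammaMeas η σ = η ^ s * Real.Gamma (σ / η + s) / Real.Gamma (σ / η) := by
  rw [gammaMeas, integral_withDensity_eq_integral_toReal_smul
    (Measurable.ite measurableSet_Ioi (by fun_prop) measurable_const).ennreal_ofReal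
    (ae_of_all _ fun _ => ENNReal.ofReal_lt_top)]
  set a := σ / η
  have hΓ : 0 < Real.Gamma a := Real.Gamma_pos_of_pos (div_pos hσ hη)
  have hdens (r : ℝ) : (ENNReal.ofReal (if 0 < r then
        (Real.Gamma a)⁻¹ * η ^ (-a) * r ^ (a - 1) * Real.exp (-r / η) else 0)).toReal • r ^ s
      = (Set.Ioi 0).indicator (fun r => (Real.Gamma a)⁻¹ * η ^ (-a) *
          (r ^ (a - 1 + s) * Real.exp (-η⁻¹ * r ^ (1 : ℝ)))) r := by
    by_cases hr : 0 < r
    · rw [Set.indicator_of_mem (Set.mem_Ioi.2 hr), if_pos hr,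
        ENNReal.toReal_ofReal (by positivity), smul_eq_mul, Real.rpow_add hr, Real.rpow_one]
      ring_nf
    · simp [hr]
  rw [funext hdens, integral_indicator measurableSet_Ioi, integral_const_mul,
    integral_rpow_mul_exp_neg_mul_rpow one_pos (by linarith) (inv_pos.2 hη),
    Real.inv_rpow hη.le, ← Real.rpow_neg hη.le, neg_div, neg_neg,
    show (a - 1 + s + 1) / 1 = a + s by ring, Real.rpow_add hη, Real.rpow_neg hη.le]
  field_simp

lemma integrable_rpow_gammaMeas (hη : 0 < η) (hσ : 0 < σ) {s : ℝ} (hs : -(σ / η) < s) :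
    Integrable (fun r : ℝ => r ^ s) (gammaMeas η σ) := by
  refine .of_integral_ne_zero ?_
  rw [integral_rpow_gammaMeas hη hσ hs]
  have : 0 < Real.Gamma (σ / η) := Real.Gamma_pos_of_pos (div_pos hσ hη)
  have : 0 < Real.Gamma (σ / η + s) := Real.Gamma_pos_of_pos (by linarith)
  positivity

lemma integral_pow_gammaMeas (hη : 0 < η) (hσ : 0 < σ) (n : ℕ) :
    ∫ r, r ^ n ∂gammaMeas η σ = ∏ j ∈ Finset.range n, (σ + j * η) := by
  have ha : 0 < σ / η := div_pos hσ hη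
  have hmoment := integral_rpow_gammaMeas hη hσ (s := n) (by linarith [n.cast_nonneg (α := ℝ)])
  simp_rw [Real.rpow_natCast] at hmoment
  rw [hmoment, Real.Gamma_add_nat_eq_mul_prod (fun k => by positivity),
    mul_div_assoc, mul_div_cancel_left₀ _ (Real.Gamma_pos_of_pos ha).ne',
    show η ^ n = ∏ _j ∈ Finset.range n, η by simp, ← Finset.prod_mul_distrib]
  refine Finset.prod_congr rfl fun j _ => ?_
  field_simp

end GammaDistribution

section Mixture

noncomputable def nuKernel : Kernel ℝ ℂ :=
  (Kernel.const ℝ (volume : Measure ℂ)).withDensity fun r z =>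
    ENNReal.ofReal ((Real.pi * r)⁻¹ * Real.exp (-‖z‖ ^ 2 / r))

lemma nuKernel_apply (r : ℝ) : nuKernel r = nuC r := by
  rw [nuKernel, Kernel.withDensity_apply _ (by fun_prop), Kernel.const_apply, nuC]

lemma lambdaMeas_eq_comp (η σ : ℝ) : lambdaMeas η σ = nuKernel ∘ₘ gammaMeas η σ := by
  rw [lambdaMeas, funext nuKernel_apply]

variable {η σ : ℝ}

lemma integral_lambdaMeas {E : Type*} [NormedAddCommGroup E] [NormedSpace ℝ E] {f : ℂ → E}
    (hf : Integrable f (lambdaMeas η σ)) :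
    ∫ z, f z ∂lambdaMeas η σ = ∫ r, ∫ z, f z ∂nuC r ∂gammaMeas η σ := by
  rw [lambdaMeas_eq_comp] at hf ⊢
  simp_rw [Measure.integral_comp hf, nuKernel_apply]

lemma integrable_pow_mul_conj_pow_lambdaMeas (hη : 0 < η) (hσ : 0 < σ) (m n : ℕ) :
    Integrable (fun z : ℂ => z ^ m * (starRingEnd ℂ) (z ^ n)) (lambdaMeas η σ) := by
  have hcont : Continuous fun z : ℂ => z ^ m * (starRingEnd ℂ) (z ^ n) := by fun_prop
  have hnorm (z : ℂ) : ‖z ^ m * (starRingEnd ℂ) (z ^ n)‖ = ‖z‖ ^ ((m + n : ℕ) : ℝ) := by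
    rw [norm_mul, Complex.norm_conj, norm_pow, norm_pow, Real.rpow_natCast, pow_add]
  have hk : -2 < ((m + n : ℕ) : ℝ) := by linarith [(m + n).cast_nonneg (α := ℝ)]
  rw [lambdaMeas_eq_comp, Measure.integrable_comp_iff hcont.aestronglyMeasurable]
  simp only [nuKernel_apply, hnorm]
  constructor
  · filter_upwards [gammaMeas_ae_pos] with r hr
    exact (integrable_norm_rpow_nuC hr hk).mono' hcont.aestronglyMeasurable
      (ae_of_all _ fun z => (hnorm z).le)
  · refine ((integrable_rpow_gammaMeas hη hσ (s := ((m + n : ℕ) : ℝ) / 2) ?_).const_mul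
      (Real.Gamma (((m + n : ℕ) : ℝ) / 2 + 1))).congr ?_
    · have : 0 < σ / η := div_pos hσ hη
      linarith [(m + n).cast_nonneg (α := ℝ)]
    · filter_upwards [gammaMeas_ae_pos] with r hr
      rw [integral_norm_rpow_nuC hr hk, mul_comm]

end Mixture

theorem stmt_16 (η σ : ℝ) (hη : 0 < η) (hσ : 0 < σ) (m n : ℕ) :
    ∫ z : ℂ, z ^ m * (starRingEnd ℂ) (z ^ n) ∂(lambdaMeas η σ) =
      if m = n then (n.factorial : ℂ) * ∏ j ∈ Finset.range n, ((σ : ℂ) + j * η) else 0 := by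
  rw [integral_lambdaMeas (integrable_pow_mul_conj_pow_lambdaMeas hη hσ m n),
    integral_congr_ae (gammaMeas_ae_pos.mono fun r hr => integral_pow_mul_conj_pow_nuC hr m n)]
  split_ifs with hmn
  · rw [integral_complex_ofReal, integral_mul_const, integral_pow_gammaMeas hη hσ]
    push_cast
    ring
  · exact integral_zero ℝ ℂ
end
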